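/- arXiv:math/0607279 — 2 statements merged into one kernel-verified Lean document; each statement's English description precedes it below -/
import Mathlib

section
/- Let L be a finite meet-semilattice, let S = {x₁,…,x_n} ⊆ L be a factor-closed subset (i.e., if x ∈ S and y ∈ L with y ≤ x, then y ∈ S), let R be a commutative ring, let k ≥ 2, let 𝓕 : (S_n)^{k-2} → R be any map, and for each x ∈ S let F_x : L → R be a function. Define f_x(z) = ∑_{y ∈ S} μ(y,z) F_x(y) for z ∈ S, where μ is the Möbius function of L. Then Det_𝓕( (F_{x_{i₁}}(x_{i₁} ∧ x_{i₂} ∧ ⋯ ∧ x_{i_k}))_{1≤i₁,…,i_k≤n} ) = 𝓕(Id,…,Id) · ∏_{x ∈ S} f_x(x). -/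
/-!
Möbius inversion on the factor-closed set `S` gives `F_x(w) = ∑_{y ∈ S, y ≤ w} f_x(y)` for
`w ∈ S`, so every entry of the hypermatrix is
`∑_j [x_j ≤ x_{i₂}] [x_j ≤ x_{i₁} ∧ ⋯ ∧ x_{i_k}] f_{x_{i₁}}(x_j)`.
Expanding the product over all choices `c : [n] → [n]` of summation indices separates the
`σ₂`-sum, an ordinary determinant of the zeta matrix with rows `c`, from the `(σ₃,…,σ_k)`-sum.
The determinant vanishes unless `c` is a permutation. A permutation `σ` with `x_i ≤ x_{σ(i)}`
for all `i` is the identity (follow the cycle of `i`), so for a permutation `c ≠ id` some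
factor `[x_{c(i)} ≤ x_i]` of the second sum vanishes, while for `c = id` the zeta determinant is
`1` and only `σ₃ = ⋯ = σ_k = id` survives.
-/

/-- The `𝓕`-determinant of a `k`-dimensional hypermatrix (`k = m + 2`), where the first two
indices are explicit and the remaining `m = k - 2` indices are gathered in a tuple:
`Det_𝓕(M) = ∑_{(σ₂,σ₃,…,σ_k)} sign(σ₂) ⋅ 𝓕(σ₃,…,σ_k) ⋅ ∏_i M_{i,σ₂(i),…,σ_k(i)}`. -/
def DetF {R : Type*} [CommRing R] {n m : ℕ}
    (𝓕 : (Fin m → Equiv.Perm (Fin n)) → R)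
    (M : Fin n → Fin n → (Fin m → Fin n) → R) : R :=
  ∑ σ₂ : Equiv.Perm (Fin n), ∑ τ : Fin m → Equiv.Perm (Fin n),
    ((Equiv.Perm.sign σ₂ : ℤ) : R) * 𝓕 τ * ∏ i : Fin n, M i (σ₂ i) (fun j => τ j i)

/-- The meet `a ⊓ v 0 ⊓ v 1 ⊓ ⋯` of an element `a` with a tuple `v` of elements of a
meet-semilattice. -/
def meetAll {L : Type*} [SemilatticeInf L] {m : ℕ} (a : L) (v : Fin m → L) : L :=
  (List.ofFn v).foldr (· ⊓ ·) a

open Finset Function Equiv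

section FactorClosed

variable {ι L R : Type*} [Fintype ι] [DecidableEq ι] [PartialOrder L] [DecidableEq L]
  [LocallyFiniteOrder L] [DecidableLE L] [Ring R] {x : ι → L}

lemma sum_ite_le_mu_eq (hx : Injective x) (hfc : ∀ i w, w ≤ x i → ∃ j, x j = w) (j l : ι) :
    ∑ k, (if x k ≤ x l then IncidenceAlgebra.mu R (x j) (x k) else 0) = if j = l then 1 else 0 := by
  have hIcc : ({k | x k ∈ Icc (x j) (x l)} : Finset ι).image x = Icc (x j) (x l) := by
    ext z
    simp only [mem_image, mem_filter, mem_univ, true_and]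
    constructor
    · rintro ⟨k, hk, rfl⟩
      exact hk
    · intro hz
      obtain ⟨k, rfl⟩ := hfc l z (mem_Icc.1 hz).2
      exact ⟨k, hz, rfl⟩
  calc ∑ k, (if x k ≤ x l then IncidenceAlgebra.mu R (x j) (x k) else 0)
      = ∑ k with x k ∈ Icc (x j) (x l), IncidenceAlgebra.mu R (x j) (x k) := by
        rw [sum_filter]
        refine sum_congr rfl fun k _ => ?_
        by_cases h : x j ≤ x k <;> simp [h, IncidenceAlgebra.apply_eq_zero_of_not_le]
    _ = ∑ z ∈ Icc (x j) (x l), IncidenceAlgebra.mu R (x j) z := by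
        rw [← sum_image (f := IncidenceAlgebra.mu R (x j)) hx.injOn, hIcc]
    _ = if j = l then 1 else 0 := by
        rw [IncidenceAlgebra.sum_Icc_mu_right]
        simp [hx.eq_iff]

lemma eq_sum_ite_le_of_eq_sum_mu (hx : Injective x) (hfc : ∀ i w, w ≤ x i → ∃ j, x j = w)
    (F f : L → R) (hf : ∀ v, f v = ∑ j, IncidenceAlgebra.mu R (x j) v * F (x j)) (l : ι) :
    F (x l) = ∑ j, if x j ≤ x l then f (x j) else 0 := by
  calc F (x l) = ∑ k, (if k = l then 1 else 0) * F (x k) := by simp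
    _ = ∑ k, (∑ j, if x j ≤ x l then IncidenceAlgebra.mu R (x k) (x j) else 0) * F (x k) := by
        simp_rw [sum_ite_le_mu_eq hx hfc]
    _ = ∑ j, if x j ≤ x l then f (x j) else 0 := by
        simp_rw [hf, sum_mul, ite_mul, zero_mul]
        rw [sum_comm]
        refine sum_congr rfl fun j _ => ?_
        split_ifs <;> simp

end FactorClosed

lemma apply_inf_eq_sum {ι L R : Type*} [Fintype ι] [DecidableEq ι] [SemilatticeInf L]
    [DecidableEq L] [LocallyFiniteOrder L] [DecidableLE L] [Ring R] {x : ι → L}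
    (hx : Injective x) (hfc : ∀ i w, w ≤ x i → ∃ j, x j = w) (F f : L → R)
    (hf : ∀ v, f v = ∑ j, IncidenceAlgebra.mu R (x j) v * F (x j)) (w : L) (b : ι) :
    F (w ⊓ x b) = ∑ j, (if x j ≤ x b then 1 else 0) * (if x j ≤ w then f (x j) else 0) := by
  obtain ⟨l, hl⟩ := hfc b (w ⊓ x b) inf_le_right
  rw [← hl, eq_sum_ite_le_of_eq_sum_mu hx hfc F f hf l, hl]
  simp_rw [ite_zero_mul_ite_zero, one_mul, le_inf_iff, and_comm]

section MeetAll

variable {L : Type*} [SemilatticeInf L] {m : ℕ}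

lemma meetAll_inf (a b : L) (v : Fin m → L) : meetAll (a ⊓ b) v = meetAll a v ⊓ b := by
  unfold meetAll
  induction List.ofFn v with
  | nil => rfl
  | cons hd tl ih => simp only [List.foldr_cons, ih, inf_assoc]

lemma le_meetAll_iff {w a : L} {v : Fin m → L} : w ≤ meetAll a v ↔ w ≤ a ∧ ∀ r, w ≤ v r := by
  suffices ∀ l : List L, w ≤ l.foldr (· ⊓ ·) a ↔ w ≤ a ∧ ∀ b ∈ l, w ≤ b by
    simp [meetAll, this]
  intro l
  induction l with
  | nil => simp
  | cons hd tl ih => simp only [List.foldr_cons, le_inf_iff, ih, List.forall_mem_cons]; tauto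

end MeetAll

section DetF

variable {R : Type*} [CommRing R] {n m : ℕ}

lemma detF_eq_sum_det_mul (𝓕 : (Fin m → Perm (Fin n)) → R)
    (M : Fin n → Fin n → (Fin m → Fin n) → R) (A : Fin n → Fin n → R)
    (B : Fin n → (Fin m → Fin n) → Fin n → R) (hM : ∀ i b t, M i b t = ∑ j, A j b * B i t j) :
    DetF 𝓕 M = ∑ c : Fin n → Fin n,
      ((Matrix.of A).submatrix c id).det * ∑ τ, 𝓕 τ * ∏ i, B i (fun r => τ r i) (c i) := by
  rw [DetF]
  simp only [hM, Fintype.prod_sum, prod_mul_distrib,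
    ← Matrix.det_transpose (Matrix.submatrix _ _ _), Matrix.det_apply, mul_sum, sum_mul]
  refine (sum_congr rfl fun σ _ => sum_comm).trans ?_
  rw [sum_comm]
  refine sum_congr rfl fun c _ => ?_
  rw [sum_comm]
  refine sum_congr rfl fun τ _ => sum_congr rfl fun σ _ => ?_
  simp only [Matrix.transpose_apply, Matrix.submatrix_apply, Matrix.of_apply, id, Units.smul_def,
    zsmul_eq_mul]
  ring

end DetF

section Perm

variable {ι α : Type*} [PartialOrder α] {x : ι → α}

lemma le_apply_pow_of_forall_le {σ : Perm ι} (h : ∀ i, x i ≤ x (σ i)) (k : ℕ) (i : ι) :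
    x i ≤ x ((σ ^ k) i) := by
  induction k with
  | zero => rfl
  | succ k ih => exact ih.trans (by rw [pow_succ', Perm.mul_apply]; exact h _)

lemma perm_eq_one_of_forall_le [Finite ι] (hx : Injective x) {σ : Perm ι}
    (h : ∀ i, x i ≤ x (σ i)) : σ = 1 := by
  ext i
  obtain ⟨k, hk⟩ := (Perm.SameCycle.refl σ i).apply_left.exists_nat_pow_eq
  have hback := le_apply_pow_of_forall_le h k (σ i)
  rw [hk] at hback
  exact hx (le_antisymm hback (h i))

lemma perm_eq_one_of_forall_ge [Finite ι] (hx : Injective x) {σ : Perm ι}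
    (h : ∀ i, x (σ i) ≤ x i) : σ = 1 :=
  perm_eq_one_of_forall_le (α := αᵒᵈ) hx h

lemma det_of_ite_le_eq_one {R : Type*} [Fintype ι] [DecidableEq ι] [DecidableLE α] [CommRing R]
    (hx : Injective x) : (Matrix.of fun i j => if x i ≤ x j then (1 : R) else 0).det = 1 := by
  rw [Matrix.det_apply, sum_eq_single 1]
  · simp
  · intro σ _ hσ
    obtain ⟨i, hi⟩ : ∃ i, ¬ x (σ i) ≤ x i := by
      by_contra! h
      exact hσ (perm_eq_one_of_forall_ge hx h)
    rw [prod_eq_zero (mem_univ i) (by simp [hi]), smul_zero]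
  · simp

end Perm

section MeetAllProd

variable {ι L R : Type*} [Fintype ι] [SemilatticeInf L] [DecidableLE L] {m : ℕ} {x : ι → L}

lemma prod_ite_le_meetAll_eq_zero [CommMonoidWithZero R] (hx : Injective x) {c : ι → ι}
    (hc : Injective c) (hne : c ≠ id) (g : ι → R) (v : ι → Fin m → L) :
    ∏ i, (if x (c i) ≤ meetAll (x i) (v i) then g i else 0) = 0 := by
  obtain ⟨i, hi⟩ : ∃ i, ¬ x (c i) ≤ x i := by
    by_contra! h
    have := perm_eq_one_of_forall_ge hx (σ := Equiv.ofBijective c hc.bijective_of_finite) h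
    exact hne (funext fun i => congrArg (· i) this)
  exact prod_eq_zero (mem_univ i) (if_neg fun h => hi (le_meetAll_iff.1 h).1)

lemma sum_mul_prod_ite_le_meetAll_self [DecidableEq ι] [CommSemiring R] (hx : Injective x)
    (𝓕 : (Fin m → Perm ι) → R) (g : ι → R) :
    ∑ τ, 𝓕 τ * ∏ i, (if x i ≤ meetAll (x i) (fun r => x (τ r i)) then g i else 0) =
      𝓕 (fun _ => 1) * ∏ i, g i := by
  simp_rw [le_meetAll_iff, le_rfl, true_and]
  rw [sum_eq_single (fun _ => 1)]
  · simp
  · intro τ _ hτ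
    obtain ⟨r, hr⟩ : ∃ r, τ r ≠ 1 := by
      by_contra! h
      exact hτ (funext h)
    obtain ⟨i, hi⟩ : ∃ i, ¬ x i ≤ x (τ r i) := by
      by_contra! h
      exact hr (perm_eq_one_of_forall_le hx h)
    rw [prod_eq_zero (mem_univ i) (if_neg fun h => hi (h r)), mul_zero]
  · simp

end MeetAllProd

theorem detF_factor_closed_general {L R : Type*} [DecidableEq L] [SemilatticeInf L]
    [LocallyFiniteOrder L] [CommRing R]
    {n m : ℕ} (x : Fin n → L) (hinj : Function.Injective x)
    (hfc : ∀ (i : Fin n) (w : L), w ≤ x i → ∃ j : Fin n, x j = w)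
    (𝓕 : (Fin m → Equiv.Perm (Fin n)) → R)
    (F : Fin n → L → R)
    (f : Fin n → L → R)
    (hf : ∀ i v, f i v = ∑ j : Fin n, IncidenceAlgebra.mu R (x j) v * F i (x j)) :
    DetF 𝓕 (fun i₁ i₂ t => F i₁ (meetAll (x i₁ ⊓ x i₂) (fun j => x (t j)))) =
      𝓕 (fun _ => 1) * ∏ i : Fin n, f i (x i) := by
  classical
  have hM : ∀ i b (t : Fin m → Fin n), F i (meetAll (x i ⊓ x b) fun j => x (t j)) =
      ∑ j, (if x j ≤ x b then 1 else 0) *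
        (if x j ≤ meetAll (x i) (fun r => x (t r)) then f i (x j) else 0) := fun i b t => by
    rw [meetAll_inf]
    exact apply_inf_eq_sum hinj hfc (F i) (f i) (hf i) _ b
  rw [detF_eq_sum_det_mul 𝓕 _ _ _ hM, sum_eq_single id]
  · rw [Matrix.submatrix_id_id, det_of_ite_le_eq_one hinj, one_mul]
    exact sum_mul_prod_ite_le_meetAll_self hinj 𝓕 fun i => f i (x i)
  · intro c _ hc
    by_cases hci : Injective c
    · rw [sum_eq_zero fun τ _ => by
        rw [prod_ite_le_meetAll_eq_zero hinj hci hc (fun i => f i (x (c i))), mul_zero], mul_zero]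
    · obtain ⟨a, b, hab, hne⟩ := not_injective_iff.1 hci
      rw [Matrix.det_zero_of_row_eq hne (funext fun j => by simp [hab]), zero_mul]
  · simp

/-- let `L` be a finite meet-semilattice, `S = {x₁,…,x_n} ⊆ L` a factor-closed
subset, `k = m + 2 ≥ 2`, `𝓕 : (S_n)^{k-2} → R`, `F_x : L → R` for each `x ∈ S`, and
`f_x(v) = ∑_{y ∈ S} μ(y,v) F_x(y)` with `μ` the Möbius function of `L`.  Then
`Det_𝓕((F_{x_{i₁}}(x_{i₁} ∧ ⋯ ∧ x_{i_k}))) = 𝓕(Id,…,Id) ⋅ ∏_{x ∈ S} f_x(x)`. -/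
theorem detF_factor_closed {L R : Type*} [Fintype L] [DecidableEq L] [SemilatticeInf L]
    [LocallyFiniteOrder L] [CommRing R]
    {n m : ℕ} (x : Fin n → L) (hinj : Function.Injective x)
    (hfc : ∀ (i : Fin n) (w : L), w ≤ x i → ∃ j : Fin n, x j = w)
    (𝓕 : (Fin m → Equiv.Perm (Fin n)) → R)
    (F : Fin n → L → R)
    (f : Fin n → L → R)
    (hf : ∀ i v, f i v = ∑ j : Fin n, IncidenceAlgebra.mu R (x j) v * F i (x j)) :
    DetF 𝓕 (fun i₁ i₂ t => F i₁ (meetAll (x i₁ ⊓ x i₂) (fun j => x (t j)))) =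
      𝓕 (fun _ => 1) * ∏ i : Fin n, f i (x i) :=
  detF_factor_closed_general x hinj hfc 𝓕 F f hf
end

section
/- Let R be a commutative ring, k ≥ 2, and n ≥ 1. Let F : ℕ⁺ → R and write f = F ∗ μ, so f(d) = ∑_{e ∣ d} F(e) μ(d/e). Then the k-dimensional GCD hyperdeterminant over indices {1,…,n} satisfies ∑_{(σ₂,…,σ_k) ∈ (S_n)^{k-1}} sign(σ₂)⋯sign(σ_k) · ∏_{i=1}^n F(gcd(i, σ₂(i), …, σ_k(i))) = ∏_{i=1}^n f(i). -/
/-- The gcd `gcd(a, v 0, v 1, …)` of a positive integer `a` with a tuple `v` of positive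
integers. -/
def gcdAll {p : ℕ} (a : ℕ) (v : Fin p → ℕ) : ℕ :=
  (List.ofFn v).foldr Nat.gcd a

/-!
By Möbius inversion `F(m) = ∑_{d ∣ m} f(d)`. Since the index set is factor-closed,
`F(gcd(i, σ₂(i), …, σ_k(i)))` is the sum of `f(e)` over the indices `e` dividing `i` and every
`σ_j(i)`, so with the divisibility matrix `Z(a, e) = [e ∣ a]` each factor is
`∑_e [e ∣ i] f(e) ∏_j Z(σ_j(i), e)`. Expanding the product over `i` as a sum over maps `τ` and
summing over the permutations turns the hyperdeterminant into
`∑_τ ∏_i [τ(i) ∣ i] f(τ(i)) · det(Z ∘ τ)^(k-1)`. A non-injective `τ` gives two equal columns, and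
an injective `τ` with `τ(i) ≤ i` for all `i` is the identity because `∑ τ(i) = ∑ i`; the same
argument gives `det Z = 1`, leaving `∏ f(i)`.
-/

open Finset Function Matrix

theorem dvd_gcdAll_iff {p : ℕ} (e a : ℕ) (v : Fin p → ℕ) :
    e ∣ gcdAll a v ↔ e ∣ a ∧ ∀ j, e ∣ v j := by
  induction p with
  | zero => simp [gcdAll]
  | succ p ih =>
    simp only [gcdAll, List.ofFn_succ, List.foldr_cons, Nat.dvd_gcd_iff,
      Fin.forall_fin_succ] at ih ⊢
    rw [ih]
    tauto

theorem Function.Injective.eq_id_of_le {ι M : Type*} [Fintype ι] [AddCommMonoid M]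
    [PartialOrder M] [IsOrderedCancelAddMonoid M] {ℓ : ι → M} (hℓ : Injective ℓ)
    {τ : ι → ι} (hτ : Injective τ) (hle : ∀ i, ℓ (τ i) ≤ ℓ i) : τ = id := by
  have hsum : ∑ i, ℓ (τ i) = ∑ i, ℓ i :=
    (Equiv.ofBijective τ (Finite.injective_iff_bijective.1 hτ)).sum_comp ℓ
  funext i
  exact hℓ ((sum_eq_sum_iff_of_le fun i _ => hle i).1 hsum i (mem_univ i))

theorem sum_sign_mul_prod_sum_eq_sum_det_pow {R ι κ : Type*} [CommRing R] [Fintype ι]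
    [DecidableEq ι] [Fintype κ] (k : ℕ) (A : ι → κ → R) (Z : Matrix ι κ R) :
    ∑ σ : Fin k → Equiv.Perm ι,
        (∏ j, ((Equiv.Perm.sign (σ j) : ℤ) : R)) * ∏ i, ∑ e, A i e * ∏ j, Z (σ j i) e =
      ∑ τ : ι → κ, (∏ i, A i (τ i)) * (Z.submatrix id τ).det ^ k := by
  simp only [det_apply', submatrix_apply, id, Fintype.sum_pow, Fintype.prod_sum, mul_sum]
  rw [sum_comm]
  refine sum_congr rfl fun τ _ => sum_congr rfl fun σ _ => ?_
  rw [prod_mul_distrib, prod_mul_distrib, prod_comm]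
  ring

section Moebius

variable {R : Type*} [CommRing R]

def convMoebius (F : ℕ → R) (d : ℕ) : R :=
  ∑ e ∈ d.divisors, F e * ((ArithmeticFunction.moebius (d / e) : ℤ) : R)

theorem sum_divisors_convMoebius (F : ℕ → R) {m : ℕ} (hm : 0 < m) :
    ∑ d ∈ m.divisors, convMoebius F d = F m := by
  refine ArithmeticFunction.sum_eq_iff_sum_mul_moebius_eq.2 (fun d _ => ?_) m hm
  rw [Nat.sum_divisorsAntidiagonal' fun a b => ((ArithmeticFunction.moebius a : ℤ) : R) * F b]
  simp only [convMoebius, mul_comm]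

end Moebius

section FactorClosed

variable {R ι : Type*} [CommRing R] [Fintype ι] {ℓ : ι → ℕ}

theorem sum_divisors_eq_sum_dvd (hℓ : Injective ℓ) {m : ℕ} (hm : m ≠ 0)
    (hclosed : ∀ d, d ∣ m → d ∈ Set.range ℓ) (g : ℕ → R) :
    ∑ d ∈ m.divisors, g d = ∑ e, if ℓ e ∣ m then g (ℓ e) else 0 := by
  classical
  have himage : m.divisors = (univ.filter (ℓ · ∣ m)).image ℓ := by
    ext d
    simp only [Nat.mem_divisors, mem_image, mem_filter, mem_univ, true_and]
    constructor
    · rintro ⟨hd, -⟩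
      obtain ⟨e, rfl⟩ := hclosed d hd
      exact ⟨e, hd, rfl⟩
    · rintro ⟨e, he, rfl⟩
      exact ⟨he, hm⟩
  rw [himage, sum_image hℓ.injOn, sum_filter]

theorem exists_not_dvd_of_injective_of_ne_id (hℓ : Injective ℓ) (hpos : ∀ i, 0 < ℓ i)
    {τ : ι → ι} (hτ : Injective τ) (hne : τ ≠ id) : ∃ i, ¬ ℓ (τ i) ∣ ℓ i := by
  by_contra! hdvd
  exact hne (hℓ.eq_id_of_le hτ fun i => Nat.le_of_dvd (hpos i) (hdvd i))

variable (R ℓ) in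
def divisibilityMatrix : Matrix ι ι R :=
  of fun a e => if ℓ e ∣ ℓ a then 1 else 0

theorem det_divisibilityMatrix [DecidableEq ι] (hℓ : Injective ℓ) (hpos : ∀ i, 0 < ℓ i) :
    (divisibilityMatrix R ℓ).det = 1 := by
  rw [← det_transpose, det_apply', sum_eq_single 1]
  · simp [divisibilityMatrix]
  · intro π _ hπ
    obtain ⟨i, hi⟩ :=
      exists_not_dvd_of_injective_of_ne_id hℓ hpos π.injective (by simpa [← Equiv.Perm.coe_one])
    rw [prod_eq_zero (mem_univ i) (by simp [divisibilityMatrix, hi]), mul_zero]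
  · simp

theorem apply_gcdAll_eq_sum (hℓ : Injective ℓ) (hpos : ∀ i, 0 < ℓ i)
    (hclosed : ∀ i d, d ∣ ℓ i → d ∈ Set.range ℓ) (F : ℕ → R) {p : ℕ} (i : ι) (v : Fin p → ι) :
    F (gcdAll (ℓ i) fun j => ℓ (v j)) =
      ∑ e, divisibilityMatrix R ℓ i e * convMoebius F (ℓ e) *
        ∏ j, divisibilityMatrix R ℓ (v j) e := by
  set m := gcdAll (ℓ i) fun j => ℓ (v j)
  have hm : m ∣ ℓ i := ((dvd_gcdAll_iff m _ _).1 dvd_rfl).1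
  have hm0 : 0 < m := Nat.pos_of_dvd_of_pos hm (hpos i)
  rw [← sum_divisors_convMoebius F hm0,
    sum_divisors_eq_sum_dvd hℓ hm0.ne' fun d hd => hclosed i d (hd.trans hm)]
  refine sum_congr rfl fun e _ => ?_
  simp only [divisibilityMatrix, of_apply, Fintype.prod_boole, dvd_gcdAll_iff, m]
  rw [ite_and]
  split_ifs <;> simp

theorem sum_sign_mul_prod_apply_gcdAll_eq_prod_convMoebius [DecidableEq ι] (hℓ : Injective ℓ)
    (hpos : ∀ i, 0 < ℓ i) (hclosed : ∀ i d, d ∣ ℓ i → d ∈ Set.range ℓ) (F : ℕ → R) (p : ℕ) :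
    ∑ σ : Fin (p + 1) → Equiv.Perm ι,
        (∏ j, ((Equiv.Perm.sign (σ j) : ℤ) : R)) *
          ∏ i, F (gcdAll (ℓ i) fun j => ℓ (σ j i)) =
      ∏ i, convMoebius F (ℓ i) := by
  simp only [apply_gcdAll_eq_sum hℓ hpos hclosed]
  rw [sum_sign_mul_prod_sum_eq_sum_det_pow, sum_eq_single id]
  · rw [submatrix_id_id, det_divisibilityMatrix hℓ hpos, one_pow, mul_one]
    simp [divisibilityMatrix]
  · intro τ _ hτ
    by_cases hinj : Injective τ
    · obtain ⟨i, hi⟩ := exists_not_dvd_of_injective_of_ne_id hℓ hpos hinj hτ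
      rw [prod_eq_zero (mem_univ i) (by simp [divisibilityMatrix, hi]), zero_mul]
    · obtain ⟨x, y, hxy, hne⟩ := not_injective_iff.1 hinj
      rw [det_zero_of_column_eq hne (fun a => by simp [hxy]), zero_pow p.succ_ne_zero,
        mul_zero]
  · simp

end FactorClosed

theorem hyperdet_gcd_factor_closed_general {R : Type*} [CommRing R] {n p : ℕ}
    (F : ℕ → R) :
    ∑ σ : Fin (p + 1) → Equiv.Perm (Fin n),
        ((∏ j, (Equiv.Perm.sign (σ j) : ℤ)) : ℤ) *
          ∏ i : Fin n, F (gcdAll ((i : ℕ) + 1) (fun j => ((σ j i : ℕ) + 1))) =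
      ∏ i : Fin n,
        ∑ e ∈ ((i : ℕ) + 1).divisors,
          F e * ((ArithmeticFunction.moebius (((i : ℕ) + 1) / e) : ℤ) : R) := by
  have hclosed (i : Fin n) (d : ℕ) (hd : d ∣ (i : ℕ) + 1) :
      d ∈ Set.range fun i : Fin n => (i : ℕ) + 1 := by
    have hdi := Nat.le_of_dvd i.val.succ_pos hd
    have hd0 := Nat.pos_of_dvd_of_pos hd i.val.succ_pos
    exact ⟨⟨d - 1, by omega⟩, Nat.sub_add_cancel hd0⟩
  exact_mod_cast sum_sign_mul_prod_apply_gcdAll_eq_prod_convMoebius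
    (fun a b h => Fin.ext (Nat.succ_injective h)) (fun i => i.val.succ_pos) hclosed F p

/-- let `R` be a commutative ring, `k = p + 2 ≥ 2`, `n ≥ 1`, `F : ℕ⁺ → R` and
`f = F ∗ μ`, i.e. `f(d) = ∑_{e ∣ d} F(e) μ(d/e)`.  The `k`-dimensional GCD hyperdeterminant
over `{1,…,n}` satisfies
`∑_{(σ₂,…,σ_k) ∈ (S_n)^{k-1}} sign(σ₂)⋯sign(σ_k) ∏ᵢ F(gcd(i, σ₂(i), …, σ_k(i))) = ∏ᵢ f(i)`. -/
theorem hyperdet_gcd_factor_closed {R : Type*} [CommRing R] {n p : ℕ} (hn : 1 ≤ n)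
    (F : ℕ → R) :
    ∑ σ : Fin (p + 1) → Equiv.Perm (Fin n),
        ((∏ j, (Equiv.Perm.sign (σ j) : ℤ)) : ℤ) *
          ∏ i : Fin n, F (gcdAll ((i : ℕ) + 1) (fun j => ((σ j i : ℕ) + 1))) =
      ∏ i : Fin n,
        ∑ e ∈ ((i : ℕ) + 1).divisors,
          F e * ((ArithmeticFunction.moebius (((i : ℕ) + 1) / e) : ℤ) : R) :=
  hyperdet_gcd_factor_closed_general F
end
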